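/- The function η is integrable on [0,∞) and ∫₀^∞ η(t) dt ≤ 3. (Second part of Lemma 4.3 of the paper.) -/
import Mathlib

open MeasureTheory ProbabilityTheory Real

/-- `η(t) = E_{z∼N(0,1)} [1 / (1 + exp(t²/2 − t z))]`. -/
noncomputable def eta (t : ℝ) : ℝ :=
  ∫ z, (1 + Real.exp (t ^ 2 / 2 - t * z))⁻¹ ∂ gaussianReal 0 1

lemma gaussianReal_eq : gaussianReal 0 1 =
    MeasureTheory.Measure.withDensity volume
      (fun z => ((gaussianPDFReal 0 1 z).toNNReal : ENNReal)) := by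
  rw [gaussianReal_of_var_ne_zero 0 one_ne_zero]
  rfl

lemma pdf_meas : Measurable (fun z => (gaussianPDFReal 0 1 z).toNNReal) :=
  (measurable_gaussianPDFReal 0 1).real_toNNReal

lemma integral_gauss (g : ℝ → ℝ) :
    ∫ z, g z ∂ gaussianReal 0 1 = ∫ z, gaussianPDFReal 0 1 z * g z := by
  rw [gaussianReal_eq, integral_withDensity_eq_integral_smul pdf_meas]
  congr 1 with z
  simp [NNReal.smul_def, Real.coe_toNNReal _ (gaussianPDFReal_nonneg 0 1 z)]

lemma integrable_gauss_iff (g : ℝ → ℝ) :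
    Integrable g (gaussianReal 0 1) ↔ Integrable (fun z => gaussianPDFReal 0 1 z * g z) := by
  rw [gaussianReal_eq, integrable_withDensity_iff_integrable_smul pdf_meas]
  constructor <;> intro h <;> refine h.congr (Filter.Eventually.of_forall fun z => ?_) <;>
    simp [NNReal.smul_def, Real.coe_toNNReal _ (gaussianPDFReal_nonneg 0 1 z)]

lemma pdf_mul_exp (t z : ℝ) :
    gaussianPDFReal 0 1 z * Real.exp (t * z / 2 - t ^ 2 / 4)
      = Real.exp (-t ^ 2 / 8) * gaussianPDFReal (t / 2) 1 z := by
  simp only [gaussianPDFReal]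
  rw [mul_assoc, ← Real.exp_add, mul_left_comm, ← Real.exp_add]
  congr 2
  push_cast
  ring

lemma integrable_exp_gauss (t : ℝ) :
    Integrable (fun z => Real.exp (t * z / 2 - t ^ 2 / 4)) (gaussianReal 0 1) := by
  rw [integrable_gauss_iff]
  simp only [pdf_mul_exp]
  exact (integrable_gaussianPDFReal (t / 2) 1).const_mul _

lemma integral_exp_gauss (t : ℝ) :
    ∫ z, Real.exp (t * z / 2 - t ^ 2 / 4) ∂ gaussianReal 0 1 = Real.exp (-t ^ 2 / 8) := by
  rw [integral_gauss]
  simp only [pdf_mul_exp]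
  rw [integral_const_mul, integral_gaussianPDFReal_eq_one (t / 2) one_ne_zero, mul_one]

lemma inv_one_add_exp_le (x : ℝ) : (1 + Real.exp x)⁻¹ ≤ Real.exp (-x / 2) := by
  have h : Real.exp (x / 2) ≤ 1 + Real.exp x := by
    rcases le_or_gt x 0 with h | h
    · have : Real.exp (x / 2) ≤ 1 := Real.exp_le_one_iff.2 (by linarith)
      nlinarith [Real.exp_pos x]
    · have : Real.exp (x / 2) ≤ Real.exp x := Real.exp_le_exp.2 (by linarith)
      nlinarith
  have h2 : Real.exp (-x / 2) = (Real.exp (x / 2))⁻¹ := by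
    rw [← Real.exp_neg]; ring_nf
  rw [h2]
  exact inv_anti₀ (Real.exp_pos _) h

lemma eta_nonneg (t : ℝ) : 0 ≤ eta t :=
  integral_nonneg fun z => by positivity

lemma eta_le (t : ℝ) : eta t ≤ Real.exp (-t ^ 2 / 8) := by
  rw [← integral_exp_gauss t]
  refine integral_mono_of_nonneg (Filter.Eventually.of_forall fun z => by positivity)
    (integrable_exp_gauss t) (Filter.Eventually.of_forall fun z => ?_)
  have := inv_one_add_exp_le (t ^ 2 / 2 - t * z)
  calc (1 + Real.exp (t ^ 2 / 2 - t * z))⁻¹ ≤ Real.exp (-(t ^ 2 / 2 - t * z) / 2) := this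
    _ = Real.exp (t * z / 2 - t ^ 2 / 4) := by ring_nf

lemma eta_meas : StronglyMeasurable eta := by
  have : StronglyMeasurable (fun p : ℝ × ℝ => (1 + Real.exp (p.1 ^ 2 / 2 - p.1 * p.2))⁻¹) := by
    apply Continuous.stronglyMeasurable
    have hpos : ∀ p : ℝ × ℝ, (0:ℝ) < 1 + Real.exp (p.1 ^ 2 / 2 - p.1 * p.2) := fun p => by
      positivity
    exact (continuous_const.add (((continuous_fst.pow 2).div_const 2 |>.sub
      (continuous_fst.mul continuous_snd)).rexp)).inv₀ fun p => (hpos p).ne'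
  exact this.integral_prod_right'

lemma integrable_bound : IntegrableOn (fun t : ℝ => Real.exp (-t ^ 2 / 8)) (Set.Ici 0) := by
  have : Integrable (fun t : ℝ => Real.exp (-(1/8 : ℝ) * t ^ 2)) :=
    integrable_exp_neg_mul_sq (by norm_num)
  refine (this.congr (Filter.Eventually.of_forall fun t => ?_)).integrableOn
  ring_nf

/-- Second part of Lemma 4.3: `η` is integrable on `[0,∞)` and `∫₀^∞ η(t) dt ≤ 3`. -/
theorem eta_integrable_and_integral_le_three :
    IntegrableOn eta (Set.Ici 0) ∧ ∫ t in Set.Ici (0 : ℝ), eta t ≤ 3 := by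
  have hint : IntegrableOn eta (Set.Ici 0) := by
    refine Integrable.mono integrable_bound eta_meas.aestronglyMeasurable.restrict
      (Filter.Eventually.of_forall fun t => ?_)
    rw [Real.norm_eq_abs, abs_of_nonneg (eta_nonneg t), Real.norm_eq_abs,
      abs_of_nonneg (Real.exp_pos _).le]
    exact eta_le t
  refine ⟨hint, ?_⟩
  have h1 : ∫ t in Set.Ici (0:ℝ), eta t ≤ ∫ t in Set.Ici (0:ℝ), Real.exp (-t ^ 2 / 8) :=
    setIntegral_mono hint integrable_bound eta_le
  have h2 : ∫ t in Set.Ici (0:ℝ), Real.exp (-t ^ 2 / 8) = √(π / (1/8)) / 2 := by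
    rw [MeasureTheory.integral_Ici_eq_integral_Ioi, ← integral_gaussian_Ioi (1/8)]
    apply setIntegral_congr_fun measurableSet_Ioi
    intro x _
    ring_nf
  have h3 : √(π / (1/8)) / 2 ≤ 3 := by
    have : √(π / (1/8)) ≤ 6 := by
      rw [show (6:ℝ) = √36 by rw [show (36:ℝ) = 6^2 by norm_num, Real.sqrt_sq]; norm_num]
      apply Real.sqrt_le_sqrt
      have := Real.pi_le_four
      linarith
    linarith
  linarith
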